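/- Cut/admissibility of assertion composition: if X, Φ ⊢ β for every β in a finite set Ψ of assertions, and X, Φ ∪ Ψ ⊢ α, then X, Φ ⊢ α. -/
import Mathlib


inductive Term where
  | var : Nat → Term
  | basic : Nat → Term
  | pair : Term → Term → Term
  | enc : Term → Term → Term
deriving DecidableEq

inductive Subt : Term → Term → Prop where
  | refl (t) : Subt t t
  | pairL {s t₁ t₂} : Subt s t₁ → Subt s (.pair t₁ t₂)
  | pairR {s t₁ t₂} : Subt s t₂ → Subt s (.pair t₁ t₂)
  | encT {s t k} : Subt s t → Subt s (.enc t k)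
  | encK {s t k} : Subt s k → Subt s (.enc t k)

inductive DY (inv : Term → Term) : Set Term → Term → Prop where
  | ax {X t} : t ∈ X → DY inv X t
  | varAx {X x} : DY inv X (.var x)
  | pair {X t₁ t₂} : DY inv X t₁ → DY inv X t₂ → DY inv X (.pair t₁ t₂)
  | split₁ {X t₁ t₂} : DY inv X (.pair t₁ t₂) → DY inv X t₁
  | split₂ {X t₁ t₂} : DY inv X (.pair t₁ t₂) → DY inv X t₂
  | enc {X t k} : DY inv X t → DY inv X k → DY inv X (.enc t k)
  | dec {X t k} : DY inv X (.enc t k) → DY inv X (inv k) → DY inv X t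

inductive Assertion where
  | eq : Term → Term → Assertion
  | and_ : Assertion → Assertion → Assertion
  | or_ : Assertion → Assertion → Assertion
  | says : Nat → Assertion → Assertion
  | pred : Nat → Term → Assertion
  | ex : Nat → Assertion → Assertion
  | sentT : Nat → Term → Assertion
  | sentA : Nat → Assertion → Assertion
deriving DecidableEq

def Term.subst (x : Nat) (u : Term) : Term → Term
  | .var y => if y = x then u else .var y
  | .basic n => .basic n
  | .pair a b => .pair (Term.subst x u a) (Term.subst x u b)
  | .enc a b => .enc (Term.subst x u a) (Term.subst x u b)

def Term.vars : Term → Set Nat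
  | .var x => {x}
  | .basic _ => ∅
  | .pair a b => a.vars ∪ b.vars
  | .enc a b => a.vars ∪ b.vars

def Assertion.subst (x : Nat) (u : Term) : Assertion → Assertion
  | .eq s t => .eq (Term.subst x u s) (Term.subst x u t)
  | .and_ a b => .and_ (Assertion.subst x u a) (Assertion.subst x u b)
  | .or_ a b => .or_ (Assertion.subst x u a) (Assertion.subst x u b)
  | .says A a => .says A (Assertion.subst x u a)
  | .pred p t => .pred p (Term.subst x u t)
  | .ex y a => if y = x then .ex y a else .ex y (Assertion.subst x u a)
  | .sentT A t => .sentT A (Term.subst x u t)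
  | .sentA A a => .sentA A (Assertion.subst x u a)

def Assertion.fv : Assertion → Set Nat
  | .eq s t => s.vars ∪ t.vars
  | .and_ a b => a.fv ∪ b.fv
  | .or_ a b => a.fv ∪ b.fv
  | .says _ a => a.fv
  | .pred _ t => t.vars
  | .ex x a => a.fv \ {x}
  | .sentT _ t => t.vars
  | .sentA _ a => a.fv

inductive AD (inv : Term → Term) (sk : Nat → Term) :
    Set Term → Set Assertion → Assertion → Prop where
  | ax {X Φ α} : α ∈ Φ → AD inv sk X Φ α
  | reflB {X Φ m} : DY inv X (.basic m) → AD inv sk X Φ (.eq (.basic m) (.basic m))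
  | reflV {X Φ x} : AD inv sk X Φ (.eq (.var x) (.var x))
  | substEq {X Φ α x t t'} : AD inv sk X Φ (Assertion.subst x t α) →
      AD inv sk X Φ (.eq t t') → AD inv sk X Φ (Assertion.subst x t' α)
  | symm {X Φ s t} : AD inv sk X Φ (.eq s t) → AD inv sk X Φ (.eq t s)
  | trans {X Φ s t u} : AD inv sk X Φ (.eq s t) → AD inv sk X Φ (.eq t u) →
      AD inv sk X Φ (.eq s u)
  | projPair₁ {X Φ s₀ s₁ t₀ t₁} : AD inv sk X Φ (.eq (.pair s₀ s₁) (.pair t₀ t₁)) →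
      AD inv sk X Φ (.eq s₀ t₀)
  | projPair₂ {X Φ s₀ s₁ t₀ t₁} : AD inv sk X Φ (.eq (.pair s₀ s₁) (.pair t₀ t₁)) →
      AD inv sk X Φ (.eq s₁ t₁)
  | congPair {X Φ s s' t t'} : AD inv sk X Φ (.eq s s') → AD inv sk X Φ (.eq t t') →
      AD inv sk X Φ (.eq (.pair s t) (.pair s' t'))
  | projEnc₁ {X Φ s₀ s₁ t₀ t₁} : AD inv sk X Φ (.eq (.enc s₀ s₁) (.enc t₀ t₁)) →
      DY inv X (inv s₁) → DY inv X (inv t₁) → AD inv sk X Φ (.eq s₀ t₀)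
  | projEnc₂ {X Φ s₀ s₁ t₀ t₁} : AD inv sk X Φ (.eq (.enc s₀ s₁) (.enc t₀ t₁)) →
      DY inv X (inv s₁) → DY inv X (inv t₁) → AD inv sk X Φ (.eq s₁ t₁)
  | congEnc {X Φ s s' m m'} : AD inv sk X Φ (.eq s s') → AD inv sk X Φ (.eq m m') →
      AD inv sk X Φ (.eq (.enc s m) (.enc s' m'))
  | bot {X Φ m n α} : m ≠ n → AD inv sk X Φ (.eq (.basic m) (.basic n)) → AD inv sk X Φ α
  | saysI {X Φ A α} : AD inv sk X Φ α → DY inv X (sk A) → AD inv sk X Φ (.says A α)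
  | strip {X Φ A α} : AD inv sk X Φ (.says A α) → AD inv sk X Φ α
  | andI {X Φ α β} : AD inv sk X Φ α → AD inv sk X Φ β → AD inv sk X Φ (.and_ α β)
  | andE₁ {X Φ α β} : AD inv sk X Φ (.and_ α β) → AD inv sk X Φ α
  | andE₂ {X Φ α β} : AD inv sk X Φ (.and_ α β) → AD inv sk X Φ β
  | orI₁ {X Φ α β} : AD inv sk X Φ α → AD inv sk X Φ (.or_ α β)
  | orI₂ {X Φ α β} : AD inv sk X Φ β → AD inv sk X Φ (.or_ α β)
  | orE {X Φ α β δ} : AD inv sk X Φ (.or_ α β) → AD inv sk X (insert α Φ) δ →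
      AD inv sk X (insert β Φ) δ → AD inv sk X Φ δ
  | exI {X Φ α x t} : AD inv sk X Φ (Assertion.subst x t α) → AD inv sk X Φ (.ex x α)
  | exE {X Φ α β x y} : AD inv sk X Φ (.ex x α) →
      AD inv sk X (insert (Assertion.subst x (Term.var y) α) Φ) β →
      (∀ t ∈ X, y ∉ Term.vars t) → (∀ γ ∈ Φ, y ∉ Assertion.fv γ) → y ∉ Assertion.fv β →
      AD inv sk X Φ β

/-- Conjunction of `g` with all elements of `l`. -/
def conjL (g : Assertion) : List Assertion → Assertion
  | [] => g
  | b :: l => .and_ b (conjL g l)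

lemma conjL_intro {inv sk X Φ} (g : Assertion) (l : List Assertion)
    (hg : AD inv sk X Φ g) (hl : ∀ b ∈ l, AD inv sk X Φ b) :
    AD inv sk X Φ (conjL g l) := by
  induction l with
  | nil => exact hg
  | cons b l ih =>
      exact AD.andI (hl b (by simp)) (ih (fun b hb => hl b (by simp [hb])))

lemma conjL_elim {inv sk X Φ} (g : Assertion) (l : List Assertion)
    (h : AD inv sk X Φ (conjL g l)) : ∀ b ∈ l, AD inv sk X Φ b := by
  induction l with
  | nil => simp
  | cons b l ih =>
      intro c hc
      rcases List.mem_cons.1 hc with rfl | hc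
      · exact AD.andE₁ h
      · exact ih (AD.andE₂ h) c hc

lemma conjL_fv (g : Assertion) (l : List Assertion) {y : Nat}
    (hg : y ∉ Assertion.fv g) (hl : ∀ b ∈ l, y ∉ Assertion.fv b) :
    y ∉ Assertion.fv (conjL g l) := by
  induction l with
  | nil => exact hg
  | cons b l ih =>
      have h1 : y ∉ Assertion.fv b := hl b (by simp)
      have h2 := ih (fun b hb => hl b (by simp [hb]))
      simp only [conjL, Assertion.fv, Set.mem_union]
      rintro (h | h) <;> [exact h1 h; exact h2 h]

/-- Generalized context-replacement lemma: a derivation over `Γ` can be replayed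
over any context `Δ` whose free variables are controlled by those of `Γ` and all of
whose "supersets" derive every member of `Γ`. -/
lemma ad_gen {inv sk X} {Γ : Set Assertion} {α}
    (h : AD inv sk X Γ α) :
    ∀ Δ : Set Assertion,
      (∀ y, (∀ γ ∈ Γ, y ∉ Assertion.fv γ) → ∀ φ ∈ Δ, y ∉ Assertion.fv φ) →
      (∀ γ ∈ Γ, ∀ Δ', Δ ⊆ Δ' → AD inv sk X Δ' γ) →
      AD inv sk X Δ α := by
  have condStep : ∀ (δ : Assertion) (Γ Δ : Set Assertion),
      (∀ y, (∀ γ ∈ Γ, y ∉ Assertion.fv γ) → ∀ φ ∈ Δ, y ∉ Assertion.fv φ) →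
      (∀ y, (∀ γ ∈ insert δ Γ, y ∉ Assertion.fv γ) →
        ∀ φ ∈ insert δ Δ, y ∉ Assertion.fv φ) := by
    intro δ Γ Δ c y hy φ hφ
    rcases hφ with rfl | hφ
    · exact hy φ (Set.mem_insert _ _)
    · exact c y (fun γ hγ => hy γ (Set.mem_insert_of_mem _ hγ)) φ hφ
  have HStep : ∀ (δ : Assertion) (Γ Δ : Set Assertion),
      (∀ γ ∈ Γ, ∀ Δ', Δ ⊆ Δ' → AD inv sk X Δ' γ) →
      (∀ γ ∈ insert δ Γ, ∀ Δ', insert δ Δ ⊆ Δ' → AD inv sk X Δ' γ) := by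
    intro δ Γ Δ H γ hγ Δ' hΔ'
    rcases hγ with rfl | hγ
    · exact AD.ax (hΔ' (Set.mem_insert _ _))
    · exact H γ hγ Δ' (fun a ha => hΔ' (Set.mem_insert_of_mem _ ha))
  induction h with
  | ax hmem => exact fun Δ _ H => H _ hmem Δ (subset_refl _)
  | reflB h => exact fun Δ _ _ => AD.reflB h
  | reflV => exact fun Δ _ _ => AD.reflV
  | substEq h1 h2 ih1 ih2 => exact fun Δ c H => AD.substEq (ih1 Δ c H) (ih2 Δ c H)
  | symm h ih => exact fun Δ c H => AD.symm (ih Δ c H)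
  | trans h1 h2 ih1 ih2 => exact fun Δ c H => AD.trans (ih1 Δ c H) (ih2 Δ c H)
  | projPair₁ h ih => exact fun Δ c H => AD.projPair₁ (ih Δ c H)
  | projPair₂ h ih => exact fun Δ c H => AD.projPair₂ (ih Δ c H)
  | congPair h1 h2 ih1 ih2 => exact fun Δ c H => AD.congPair (ih1 Δ c H) (ih2 Δ c H)
  | projEnc₁ h d1 d2 ih => exact fun Δ c H => AD.projEnc₁ (ih Δ c H) d1 d2
  | projEnc₂ h d1 d2 ih => exact fun Δ c H => AD.projEnc₂ (ih Δ c H) d1 d2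
  | congEnc h1 h2 ih1 ih2 => exact fun Δ c H => AD.congEnc (ih1 Δ c H) (ih2 Δ c H)
  | bot hne h ih => exact fun Δ c H => AD.bot hne (ih Δ c H)
  | saysI h d ih => exact fun Δ c H => AD.saysI (ih Δ c H) d
  | strip h ih => exact fun Δ c H => AD.strip (ih Δ c H)
  | andI h1 h2 ih1 ih2 => exact fun Δ c H => AD.andI (ih1 Δ c H) (ih2 Δ c H)
  | andE₁ h ih => exact fun Δ c H => AD.andE₁ (ih Δ c H)
  | andE₂ h ih => exact fun Δ c H => AD.andE₂ (ih Δ c H)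
  | orI₁ h ih => exact fun Δ c H => AD.orI₁ (ih Δ c H)
  | orI₂ h ih => exact fun Δ c H => AD.orI₂ (ih Δ c H)
  | orE h hA hB ih ihA ihB =>
      intro Δ c H
      exact AD.orE (ih Δ c H)
        (ihA (insert _ Δ) (condStep _ _ _ c) (HStep _ _ _ H))
        (ihB (insert _ Δ) (condStep _ _ _ c) (HStep _ _ _ H))
  | exI h ih => exact fun Δ c H => AD.exI (ih Δ c H)
  | exE h1 h2 hX hΓ hβ ih1 ih2 =>
      intro Δ c H
      exact AD.exE (ih1 Δ c H)
        (ih2 (insert _ Δ) (condStep _ _ _ c) (HStep _ _ _ H))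
        hX (fun γ hγ => c _ hΓ γ hγ) hβ


theorem ad_cut (inv : Term → Term) (sk : Nat → Term)
    (X : Set Term) (Φ Ψ : Set Assertion) (hΨ : Ψ.Finite) (α : Assertion)
    (h1 : ∀ β ∈ Ψ, AD inv sk X Φ β) (h2 : AD inv sk X (Φ ∪ Ψ) α) :
    AD inv sk X Φ α := by
  rcases Set.eq_empty_or_nonempty Ψ with rfl | ⟨g, hg⟩
  · simpa using h2
  · obtain ⟨l, hl⟩ : ∃ l : List Assertion, ∀ b, b ∈ l ↔ b ∈ Ψ :=
      ⟨hΨ.toFinset.toList, fun b => by simp⟩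
    set C : Assertion := conjL g l with hC
    have dC : AD inv sk X Φ C :=
      conjL_intro g l (h1 g hg) (fun b hb => h1 b ((hl b).1 hb))
    have main : AD inv sk X (insert C Φ) α := by
      refine ad_gen h2 (insert C Φ) ?_ ?_
      · intro y hy φ hφ
        rcases hφ with rfl | hφ
        · exact conjL_fv g l (hy g (Or.inr hg))
            (fun b hb => hy b (Or.inr ((hl b).1 hb)))
        · exact hy φ (Or.inl hφ)
      · intro γ hγ Δ' hΔ'
        rcases hγ with hγ | hγ
        · exact AD.ax (hΔ' (Set.mem_insert_of_mem _ hγ))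
        · exact conjL_elim g l (AD.ax (hΔ' (Set.mem_insert _ _))) γ ((hl γ).2 hγ)
    exact AD.orE (AD.orI₁ dC) main main
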